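/- Let (α, μ) be a finite measure space, let φ : α → ℝ be measurable with φ ≥ 0 almost everywhere and with φ² integrable with respect to μ, and let λ₁, λ be real numbers with 0 < λ₁ < λ. Then there exists a real constant M such that for every t ≥ 0, ∫_α [ (λ₁/2)·t²·φ(x)² + 1 − (λ/2)·(max(t·φ(x) − 1, 0))² ] dμ(x) ≤ M. -/

import Mathlib

/-!
Pointwise, with `s = t φ(x) ≥ 0`, the integrand is `(λ₁/2)s² + 1 − (λ/2)(s − 1)₊²`. For `s ≥ 1` this is
a quadratic in `s` with leading coefficient `(λ₁ − λ)/2 < 0`, so it is bounded above by a constant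
independent of `t` and `x`; integrating that constant over the finite measure space gives `M`.
-/

open MeasureTheory

lemma mul_sq_sub_mul_sq_max_sub_one_le {a b s : ℝ} (hab : a < b) (hs : 0 ≤ s) :
    a / 2 * s ^ 2 - b / 2 * max (s - 1) 0 ^ 2 ≤ |a| / 2 + b ^ 2 / (2 * (b - a)) := by
  have hba : 0 < 2 * (b - a) := by linarith
  have hfrac : 0 ≤ b ^ 2 / (2 * (b - a)) := by positivity
  rcases le_total s 1 with hs1 | hs1
  · rw [max_eq_right (by linarith)]
    have : a * s ^ 2 ≤ |a| := by
      calc a * s ^ 2 ≤ |a| * s ^ 2 := by gcongr; exact le_abs_self a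
        _ ≤ |a| * 1 := by gcongr; exact pow_le_one₀ hs hs1
        _ = |a| := mul_one _
    linarith
  · rw [max_eq_left (by linarith)]
    -- completing the square
    have hsq : b * s - (b - a) / 2 * s ^ 2 ≤ b ^ 2 / (2 * (b - a)) := by
      rw [le_div_iff₀ hba]
      nlinarith [sq_nonneg ((b - a) * s - b)]
    have : -b ≤ |a| := by cases abs_cases a <;> linarith
    linarith

section

variable {α : Type*} [MeasurableSpace α] {μ : Measure α} {g : α → ℝ}

lemma aestronglyMeasurable_of_sq_of_ae_nonneg (hpos : ∀ᵐ x ∂μ, 0 ≤ g x)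
    (hsq : AEStronglyMeasurable (fun x => g x ^ 2) μ) : AEStronglyMeasurable g μ := by
  refine (hsq.aemeasurable.sqrt.congr ?_).aestronglyMeasurable
  filter_upwards [hpos] with x hx using Real.sqrt_sq hx

lemma integrable_sq_max_sub (hpos : ∀ᵐ x ∂μ, 0 ≤ g x) (hint : Integrable (fun x => g x ^ 2) μ)
    {c : ℝ} (hc : 0 ≤ c) : Integrable (fun x => max (g x - c) 0 ^ 2) μ := by
  have hg := aestronglyMeasurable_of_sq_of_ae_nonneg hpos hint.1
  refine hint.mono (((hg.sub aestronglyMeasurable_const).sup aestronglyMeasurable_const).pow 2) ?_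
  filter_upwards [hpos] with x hx
  rw [Real.norm_of_nonneg (by positivity), Real.norm_of_nonneg (by positivity)]
  exact pow_le_pow_left₀ (le_max_right _ _) (max_le (by linarith) hx) 2

end

theorem stmt_3_general {α : Type*} [MeasurableSpace α] (μ : Measure α) [IsFiniteMeasure μ]
    (φ : α → ℝ) (hpos : ∀ᵐ x ∂μ, 0 ≤ φ x)
    (hint : Integrable (fun x => (φ x) ^ 2) μ)
    (lam1 lam : ℝ) (h2 : lam1 < lam) :
    ∃ M : ℝ, ∀ t : ℝ, 0 ≤ t →
      (∫ x, (lam1 / 2 * t ^ 2 * (φ x) ^ 2 + 1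
        - lam / 2 * (max (t * φ x - 1) 0) ^ 2) ∂μ) ≤ M := by
  refine ⟨∫ _, (|lam1| / 2 + lam ^ 2 / (2 * (lam - lam1)) + 1) ∂μ,
    fun t ht => integral_mono_ae ?_ (integrable_const _) ?_⟩
  · have htφ : Integrable (fun x => (t * φ x) ^ 2) μ := by
      simpa only [mul_pow] using hint.const_mul (t ^ 2)
    have htφ_nonneg : ∀ᵐ x ∂μ, 0 ≤ t * φ x := by
      filter_upwards [hpos] with x hx using mul_nonneg ht hx
    exact ((hint.const_mul _).add (integrable_const 1)).sub
      ((integrable_sq_max_sub htφ_nonneg htφ zero_le_one).const_mul _)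
  · filter_upwards [hpos] with x hx
    have := mul_sq_sub_mul_sq_max_sub_one_le h2 (mul_nonneg ht hx)
    rw [mul_pow, ← mul_assoc] at this
    linarith

/-- Core of Lemma 5.1: the family of integrals
`∫ (λ₁/2)t²φ² + 1 − (λ/2)(tφ−1)₊² dμ`, `t ≥ 0`, is bounded above when `λ > λ₁ > 0`,
`μ` is a finite measure, `φ ≥ 0` a.e. and `φ²` is integrable. -/
theorem stmt_3 {α : Type*} [MeasurableSpace α] (μ : Measure α) [IsFiniteMeasure μ]
    (φ : α → ℝ) (hmeas : Measurable φ) (hpos : ∀ᵐ x ∂μ, 0 ≤ φ x)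
    (hint : Integrable (fun x => (φ x) ^ 2) μ)
    (lam1 lam : ℝ) (h1 : 0 < lam1) (h2 : lam1 < lam) :
    ∃ M : ℝ, ∀ t : ℝ, 0 ≤ t →
      (∫ x, (lam1 / 2 * t ^ 2 * (φ x) ^ 2 + 1
        - lam / 2 * (max (t * φ x - 1) 0) ^ 2) ∂μ) ≤ M :=
  stmt_3_general μ φ hpos hint lam1 lam h2
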